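/- arXiv:2208.12998 — 6 statements merged into one kernel-verified Lean document; each statement's English description precedes it below -/
import Mathlib

section
/- Fix a nonzero real number λ and integers m ≥ r ≥ 0. Let θ be the operator on ℝ[[x]] given by (θ f)(x) = x·f'(x), and let (θ)_{m−r,λ} denote the composite operator θ∘(θ − λ·id)∘···∘(θ − (m−r−1)λ·id) (the identity operator when m = r). Then for every f ∈ ℝ[[x]]: (θ)_{m−r,λ}(x^r · f^{(r)}(x)) = Σ_{l=r}^{m} {m brace l}_{r,λ} · x^l · f^{(l)}(x), where {m brace l}_{r,λ} denotes the degenerate r-Stirling number of the second kind {(m−r)+r brace (l−r)+r}_{r,λ} and f^{(l)} is the l-th formal derivative of f. -/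
open Finset PowerSeries

noncomputable section

/-- The degenerate falling factorial `(x)_{n,λ} = x(x-λ)⋯(x-(n-1)λ)`. -/
def dff (lam x : ℝ) (n : ℕ) : ℝ := ∏ i ∈ Finset.range n, (x - i * lam)

/-- The ordinary falling factorial `(x)_n = x(x-1)⋯(x-n+1)`. -/
def ff (x : ℝ) (n : ℕ) : ℝ := ∏ i ∈ Finset.range n, (x - i)

/-- The operator `θ` on `ℝ[[x]]` given by `(θ f)(x) = x·f'(x)`. -/
def theta (f : PowerSeries ℝ) : PowerSeries ℝ := PowerSeries.X * f.derivativeFun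

/-- The composite operator `(θ)_{m,λ} = θ∘(θ-λ)∘⋯∘(θ-(m-1)λ)`, the identity when `m = 0`. -/
def thetaFall (lam : ℝ) : ℕ → PowerSeries ℝ → PowerSeries ℝ
  | 0 => fun f => f
  | n + 1 => fun f => thetaFall lam n (theta f - ((n : ℝ) * lam) • f)

/-!
All operators involved are diagonal on the monomials `x^j`: `θ` multiplies `x^j` by `j`, hence
`(θ)_{n,λ}` multiplies it by `(j)_{n,λ}`, and `f ↦ x^l f^{(l)}` multiplies it by `(j)_l`.
Comparing coefficients of `x^j`, the identity becomes
`(j)_{n,λ} (j)_r = ∑_k {n+r brace k+r}_{r,λ} (j)_{r+k}`, which is the defining expansion of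
`(x + r)_{n,λ}` at `x = j - r` multiplied by `(j)_r`, since `(j)_{r+k} = (j)_r (j - r)_k`.
-/

theorem coeff_X_pow_mul_iterate_derivative {R : Type*} [CommSemiring R] (f : R⟦X⟧) (j l : ℕ) :
    coeff j (X ^ l * (d⁄dX R)^[l] f) = j.descFactorial l * coeff j f := by
  rw [coeff_X_pow_mul']
  split_ifs with h
  · rw [coeff_iterate_derivative, Nat.sub_add_cancel h, ← Nat.add_descFactorial_eq_ascFactorial,
      Nat.sub_add_cancel h]
  · rw [Nat.descFactorial_eq_zero_iff_lt.2 (not_le.1 h), Nat.cast_zero, zero_mul]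

theorem ff_natCast (j l : ℕ) : ff j l = j.descFactorial l := by
  rw [ff, ← descPochhammer_eval_eq_prod_range, descPochhammer_eval_eq_descFactorial]

theorem ff_add (x : ℝ) (r k : ℕ) : ff x (r + k) = ff x r * ff (x - r) k := by
  rw [ff, prod_range_add, ff, ff]
  congr 1
  refine prod_congr rfl fun i _ => ?_
  push_cast
  ring

theorem coeff_theta (f : ℝ⟦X⟧) (j : ℕ) : coeff j (theta f) = j * coeff j f := by
  rcases j with _ | j
  · simp [theta]
  · rw [theta, coeff_succ_X_mul]
    exact (coeff_derivative f j).trans (by push_cast; ring)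

theorem coeff_thetaFall (lam : ℝ) (n : ℕ) (f : ℝ⟦X⟧) (j : ℕ) :
    coeff j (thetaFall lam n f) = dff lam j n * coeff j f := by
  induction n generalizing f with
  | zero => simp [thetaFall, dff]
  | succ n ih =>
    rw [thetaFall, ih, map_sub, coeff_theta, coeff_smul, smul_eq_mul, dff, dff, prod_range_succ]
    ring

theorem thetaFall_X_pow_mul_iterate_derivative (lam : ℝ) (r n : ℕ) (c : ℕ → ℝ)
    (hc : ∀ x : ℝ, dff lam (x + r) n = ∑ k ∈ range (n + 1), c k * ff x k) (f : ℝ⟦X⟧) :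
    thetaFall lam n (X ^ r * (d⁄dX ℝ)^[r] f) =
      ∑ k ∈ range (n + 1), c k • (X ^ (r + k) * (d⁄dX ℝ)^[r + k] f) := by
  ext j
  have hj := hc (j - r)
  rw [sub_add_cancel] at hj
  simp only [coeff_thetaFall, map_sum, coeff_smul, coeff_X_pow_mul_iterate_derivative, smul_eq_mul,
    ← ff_natCast, ff_add, hj, sum_mul]
  exact sum_congr rfl fun k _ => by ring

/-- `S n k` stands for `{n+r brace k+r}_{r,λ}`, so `{m brace l}_{r,λ}` is `S (m - r) (l - r)`. -/
theorem statement_1_general (lam : ℝ) (m r : ℕ) (hmr : r ≤ m)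
    (S : ℕ → ℕ → ℝ)
    (hS : ∀ (n : ℕ) (x : ℝ), dff lam (x + r) n = ∑ k ∈ Finset.range (n + 1), S n k * ff x k)
    (f : PowerSeries ℝ) :
    thetaFall lam (m - r) (PowerSeries.X ^ r * (derivativeFun (R := ℝ))^[r] f) =
      ∑ l ∈ Finset.Icc r m,
        S (m - r) (l - r) • (PowerSeries.X ^ l * (derivativeFun (R := ℝ))^[l] f) := by
  rw [← Ico_add_one_right_eq_Icc, sum_Ico_eq_sum_range, show m + 1 - r = m - r + 1 by omega]
  simp_rw [Nat.add_sub_cancel_left]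
  exact thetaFall_X_pow_mul_iterate_derivative lam r (m - r) (S (m - r)) (hS (m - r)) f

/-- for `m ≥ r ≥ 0`,
`(θ)_{m-r,λ}(x^r·f^{(r)}) = ∑_{l=r}^{m} {m brace l}_{r,λ} x^l f^{(l)}(x)`,
where `S n k` denotes the degenerate `r`-Stirling number of the second kind
`{n+r brace k+r}_{r,λ}`, characterized by `(x+r)_{n,λ} = ∑_{k=0}^n S n k (x)_k`;
thus `{m brace l}_{r,λ} = S (m-r) (l-r)`. -/
theorem statement_1 (lam : ℝ) (hlam : lam ≠ 0) (m r : ℕ) (hmr : r ≤ m)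
    (S : ℕ → ℕ → ℝ)
    (hS : ∀ (n : ℕ) (x : ℝ), dff lam (x + r) n = ∑ k ∈ Finset.range (n + 1), S n k * ff x k)
    (f : PowerSeries ℝ) :
    thetaFall lam (m - r) (PowerSeries.X ^ r * (derivativeFun (R := ℝ))^[r] f) =
      ∑ l ∈ Finset.Icc r m,
        S (m - r) (l - r) • (PowerSeries.X ^ l * (derivativeFun (R := ℝ))^[l] f) :=
  statement_1_general lam m r hmr S hS f
end
end

section
/- Fix a nonzero real number λ and integers m ≥ 0, r ≥ 0. In ℝ[[x]], the following identity holds: Σ_{k=0}^{m} {m+r brace k+r}_{r,λ} k! x^k (1−x)^{−(k+1)} = Σ_{n=0}^{∞} (n+r)_{m,λ} x^n; equivalently, (1/(1−x)) · F^{(r)}_{m,λ}(x/(1−x)) = Σ_{n=0}^{∞} (n+r)_{m,λ} x^n, where F^{(r)}_{m,λ}(x/(1−x)) denotes the result of substituting the formal power series x(1−x)^{−1} into the polynomial F^{(r)}_{m,λ}. -/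
open Finset PowerSeries

noncomputable section

/-! Coefficientwise, `k! x^k (1-x)^{-(k+1)} = ∑ₙ k! (n choose k) xⁿ = ∑ₙ (n)_k xⁿ`, so the left-hand
side has `n`-th coefficient `∑ₖ {m+r brace k+r}_{r,λ} (n)_k`, which is `(n+r)_{m,λ}` by the defining
identity of the Stirling numbers at `x = n`. The second form is the first one after expanding
`(1-x)⁻¹ · (x(1-x)⁻¹)^k`. -/

lemma ff_eq_descPochhammer_eval (x : ℝ) (k : ℕ) : ff x k = (descPochhammer ℝ k).eval x :=
  (descPochhammer_eval_eq_prod_range k x).symm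

lemma ff_natCast_s6 (n k : ℕ) : ff n k = n.descFactorial k := by
  rw [ff_eq_descPochhammer_eval, descPochhammer_eval_eq_descFactorial]

namespace PowerSeries

variable {K : Type*} [Field K]

lemma inv_one_sub_X : (1 - X : K⟦X⟧)⁻¹ = mk 1 :=
  (PowerSeries.inv_eq_iff_mul_eq_one (by simp)).mpr (mk_one_mul_one_sub_eq_one K)

lemma coeff_X_pow_mul_inv_one_sub_X_pow (k n : ℕ) :
    coeff n (X ^ k * (1 - X : K⟦X⟧)⁻¹ ^ (k + 1)) = (n.choose k : K) := by
  rw [inv_one_sub_X, mk_one_pow_eq_mk_choose_add, coeff_X_pow_mul']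
  split_ifs with hk
  · rw [coeff_mk, Nat.add_sub_cancel' hk]
  · rw [Nat.choose_eq_zero_of_lt (not_le.mp hk), Nat.cast_zero]

lemma inv_one_sub_X_mul_eval₂_X_mul_inv_one_sub_X (a : ℕ → K) (m : ℕ) :
    (1 - X : K⟦X⟧)⁻¹ * (∑ k ∈ range (m + 1), Polynomial.C (a k) * Polynomial.X ^ k).eval₂ C
        (X * (1 - X : K⟦X⟧)⁻¹) =
      ∑ k ∈ range (m + 1), a k • (X ^ k * (1 - X : K⟦X⟧)⁻¹ ^ (k + 1)) := by
  rw [Polynomial.eval₂_finsetSum, mul_sum]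
  refine sum_congr rfl fun k _ => ?_
  rw [Polynomial.eval₂_mul, Polynomial.eval₂_C, Polynomial.eval₂_X_pow, smul_eq_C_mul, mul_pow,
    pow_succ]
  ring

end PowerSeries

theorem statement_6_general (lam : ℝ) (m r : ℕ)
    (S : ℕ → ℕ → ℝ)
    (hS : ∀ (n : ℕ) (x : ℝ), dff lam (x + r) n = ∑ k ∈ Finset.range (n + 1), S n k * ff x k) :
    (∑ k ∈ Finset.range (m + 1), (S m k * k.factorial) •
        (PowerSeries.X ^ k * ((1 - PowerSeries.X : PowerSeries ℝ)⁻¹) ^ (k + 1)) =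
      PowerSeries.mk fun n => dff lam ((n : ℝ) + r) m) ∧
    ((1 - PowerSeries.X : PowerSeries ℝ)⁻¹ *
        Polynomial.eval₂ (PowerSeries.C (R := ℝ))
          (PowerSeries.X * (1 - PowerSeries.X : PowerSeries ℝ)⁻¹)
          (∑ k ∈ Finset.range (m + 1),
            Polynomial.C (S m k * k.factorial) * Polynomial.X ^ k) =
      PowerSeries.mk fun n => dff lam ((n : ℝ) + r) m) := by
  have first : (∑ k ∈ range (m + 1), (S m k * k.factorial) •
      (X ^ k * (1 - X : ℝ⟦X⟧)⁻¹ ^ (k + 1)) = mk fun n => dff lam ((n : ℝ) + r) m) := by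
    ext n
    simp only [coeff_mk, map_sum, map_smul, coeff_X_pow_mul_inv_one_sub_X_pow, smul_eq_mul, hS,
      ff_natCast_s6, Nat.descFactorial_eq_factorial_mul_choose, Nat.cast_mul, mul_assoc]
  exact ⟨first, by rw [inv_one_sub_X_mul_eval₂_X_mul_inv_one_sub_X, first]⟩

/-- in `ℝ[[x]]`,
`∑_{k=0}^m {m+r brace k+r}_{r,λ} k! x^k (1-x)^{-(k+1)} = ∑_{n=0}^∞ (n+r)_{m,λ} x^n`;
equivalently, `(1/(1-x)) · F^{(r)}_{m,λ}(x/(1-x)) = ∑_{n=0}^∞ (n+r)_{m,λ} x^n`, where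
`F^{(r)}_{m,λ}(y) = ∑_{k=0}^m {m+r brace k+r}_{r,λ} k! y^k` and `S n k` denotes the
degenerate `r`-Stirling number of the second kind `{n+r brace k+r}_{r,λ}`, characterized by
`(x+r)_{n,λ} = ∑_{k=0}^n S n k (x)_k`. -/
theorem statement_6 (lam : ℝ) (hlam : lam ≠ 0) (m r : ℕ)
    (S : ℕ → ℕ → ℝ)
    (hS : ∀ (n : ℕ) (x : ℝ), dff lam (x + r) n = ∑ k ∈ Finset.range (n + 1), S n k * ff x k) :
    (∑ k ∈ Finset.range (m + 1), (S m k * k.factorial) •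
        (PowerSeries.X ^ k * ((1 - PowerSeries.X : PowerSeries ℝ)⁻¹) ^ (k + 1)) =
      PowerSeries.mk fun n => dff lam ((n : ℝ) + r) m) ∧
    ((1 - PowerSeries.X : PowerSeries ℝ)⁻¹ *
        Polynomial.eval₂ (PowerSeries.C (R := ℝ))
          (PowerSeries.X * (1 - PowerSeries.X : PowerSeries ℝ)⁻¹)
          (∑ k ∈ Finset.range (m + 1),
            Polynomial.C (S m k * k.factorial) * Polynomial.X ^ k) =
      PowerSeries.mk fun n => dff lam ((n : ℝ) + r) m) :=
  statement_6_general lam m r S hS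
end
end

section
/- Fix a nonzero real number λ. In ℝ[[t]]: −(1−t)^{−1} · log_λ(1−t) = Σ_{n=1}^{∞} H_{n,λ} t^n, i.e., for every n ≥ 1 the coefficient of t^n in −log_λ(1−t)/(1−t) is the degenerate harmonic number H_{n,λ}. -/
open Finset PowerSeries

noncomputable section

/-- The generalized binomial coefficient `C(x,k) = x(x-1)⋯(x-k+1)/k!`. -/
def gbinom (x : ℝ) (k : ℕ) : ℝ := (∏ i ∈ Finset.range k, (x - i)) / k.factorial

/-- The degenerate harmonic numbers `H_{n,λ} = ∑_{k=1}^n (-1)^{k-1} (1/λ) C(λ,k)`,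
with `H_{0,λ} = 0`. -/
def dH (lam : ℝ) (n : ℕ) : ℝ :=
  ∑ k ∈ Finset.Icc 1 n, (-1 : ℝ) ^ (k - 1) * (1 / lam) * gbinom lam k

/-- The degenerate logarithm evaluated at `1 - t`: the formal power series
`log_λ(1-t) = ∑_{n≥1} (1/λ) C(λ,n) (-t)^n` in `ℝ[[t]]`. -/
def dlogNeg (lam : ℝ) : PowerSeries ℝ :=
  PowerSeries.mk fun n => if n = 0 then 0 else (-1 : ℝ) ^ n * (1 / lam) * gbinom lam n

/- Multiplying by `1 - t` takes successive differences of the coefficients, and the successive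
differences of `H_{n,λ}` are, up to sign, the coefficients of `log_λ(1-t)`. -/

theorem PowerSeries.coeff_succ_one_sub_X_mul {R : Type*} [CommRing R] (f : R⟦X⟧) (n : ℕ) :
    coeff (n + 1) ((1 - X) * f) = coeff (n + 1) f - coeff n f := by
  rw [sub_mul, one_mul, map_sub, coeff_succ_X_mul]

theorem dH_zero (lam : ℝ) : dH lam 0 = 0 := by
  simp [dH]

theorem dH_succ (lam : ℝ) (n : ℕ) :
    dH lam (n + 1) = dH lam n + (-1) ^ n * (1 / lam) * gbinom lam (n + 1) := by
  rw [dH, dH, sum_Icc_succ_top (by omega), Nat.add_sub_cancel]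

theorem dlogNeg_eq_neg_one_sub_X_mul (lam : ℝ) :
    dlogNeg lam = -((1 - X) * PowerSeries.mk (dH lam)) := by
  ext (_ | n)
  · simp [dlogNeg, dH_zero]
  · rw [map_neg, coeff_succ_one_sub_X_mul, coeff_mk, coeff_mk, dH_succ, dlogNeg, coeff_mk,
      if_neg n.succ_ne_zero, pow_succ]
    ring

theorem statement_14_general (lam : ℝ) :
    -((1 - PowerSeries.X : PowerSeries ℝ)⁻¹ * dlogNeg lam) =
      PowerSeries.mk fun n => dH lam n := by
  have hunit : constantCoeff (1 - X : ℝ⟦X⟧) ≠ 0 := by simp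
  rw [dlogNeg_eq_neg_one_sub_X_mul, mul_neg, neg_neg, ← mul_assoc,
    PowerSeries.inv_mul_cancel _ hunit, one_mul]

/-- in `ℝ[[t]]`, `-(1-t)⁻¹ log_λ(1-t) = ∑_{n=1}^∞ H_{n,λ} t^n`
(the coefficient of `t^0` on both sides being `0`, as `H_{0,λ} = 0`). -/
theorem statement_14 (lam : ℝ) (hlam : lam ≠ 0) :
    -((1 - PowerSeries.X : PowerSeries ℝ)⁻¹ * dlogNeg lam) =
      PowerSeries.mk fun n => dH lam n :=
  statement_14_general lam
end
end

section
/- Fix a nonzero real number λ and an integer r ≥ 1. In ℝ[[t]]: −(1−t)^{−r} · log_λ(1−t) = Σ_{n=1}^{∞} H^{(r)}_{n,λ} t^n, i.e., for every n ≥ 1 the coefficient of t^n in −log_λ(1−t)/(1−t)^r is the degenerate hyperharmonic number H^{(r)}_{n,λ}. -/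
open Finset PowerSeries

noncomputable section

/-- The degenerate hyperharmonic numbers: `H^{(1)}_{n,λ} = H_{n,λ}`, `H^{(r)}_{0,λ} = 0`, and
`H^{(r)}_{n,λ} = ∑_{k=1}^n H^{(r-1)}_{k,λ}` for `r ≥ 2`, `n ≥ 1`.
(The value at `r = 0` is junk.) -/
def dHyper (lam : ℝ) : ℕ → ℕ → ℝ
  | 0, _ => 0
  | 1, n => dH lam n
  | (r + 2), n => ∑ k ∈ Finset.Icc 1 n, dHyper lam (r + 1) k

/-! Since `(1 - t)⁻¹ = ∑ tⁿ`, multiplying a series with zero constant term by `(1 - t)⁻¹` replaces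
its coefficients by their partial sums `∑_{k=1}^n`. For `r = 1` this turns `-log_λ(1 - t)` into
`∑ H_{n,λ} tⁿ`, and each further factor `(1 - t)⁻¹` is one step of the recursion defining
`H^{(r)}_{n,λ}`. -/

namespace PowerSeries

theorem one_sub_X_inv {k : Type*} [Field k] : (1 - X : k⟦X⟧)⁻¹ = mk 1 :=
  (inv_eq_iff_mul_eq_one (by simp)).2 (mk_one_mul_one_sub_eq_one k)

variable {R : Type*} [Semiring R]

theorem coeff_mk_one_mul (f : R⟦X⟧) (n : ℕ) :
    coeff n (mk 1 * f) = ∑ i ∈ range (n + 1), coeff i f := by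
  rw [coeff_mul, ← Finset.Nat.sum_antidiagonal_swap]
  simpa using Finset.Nat.sum_antidiagonal_eq_sum_range_succ (fun i j => coeff i f) n

theorem mk_one_mul_of_constantCoeff_eq_zero {f : R⟦X⟧} (hf : constantCoeff f = 0) :
    mk 1 * f = mk fun n => ∑ k ∈ Icc 1 n, coeff k f := by
  ext n
  rw [coeff_mk_one_mul, coeff_mk, range_eq_Ico, sum_eq_sum_Ico_succ_bot n.succ_pos,
    coeff_zero_eq_constantCoeff_apply, hf, zero_add, Nat.succ_eq_add_one, Ico_add_one_right_eq_Icc]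

end PowerSeries

theorem dHyper_apply_zero (lam : ℝ) (r : ℕ) : dHyper lam r 0 = 0 := by
  rcases r with _ | _ | r <;> simp [dHyper, dH]

theorem dHyper_succ (lam : ℝ) {r : ℕ} (hr : 1 ≤ r) (n : ℕ) :
    dHyper lam (r + 1) n = ∑ k ∈ Icc 1 n, dHyper lam r k := by
  obtain ⟨s, rfl⟩ := Nat.exists_eq_add_of_le' hr
  rfl

theorem coeff_neg_dlogNeg (lam : ℝ) {k : ℕ} (hk : 1 ≤ k) :
    coeff k (-dlogNeg lam) = (-1) ^ (k - 1) * (1 / lam) * gbinom lam k := by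
  obtain ⟨m, rfl⟩ := Nat.exists_eq_add_of_le' hk
  simp [dlogNeg, pow_succ]

theorem mk_one_mul_neg_dlogNeg (lam : ℝ) :
    PowerSeries.mk 1 * -dlogNeg lam = PowerSeries.mk (dH lam) := by
  rw [mk_one_mul_of_constantCoeff_eq_zero (by simp [dlogNeg])]
  ext n
  simp only [coeff_mk, dH]
  exact sum_congr rfl fun k hk => coeff_neg_dlogNeg lam (mem_Icc.1 hk).1

theorem statement_17_general (lam : ℝ) (r : ℕ) (hr : 1 ≤ r) :
    -(((1 - PowerSeries.X : PowerSeries ℝ)⁻¹) ^ r * dlogNeg lam) =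
      PowerSeries.mk fun n => dHyper lam r n := by
  rw [one_sub_X_inv]
  induction r, hr using Nat.le_induction with
  | base => rw [pow_one, ← mul_neg, mk_one_mul_neg_dlogNeg]; rfl
  | succ r hr ih =>
    rw [pow_succ', mul_assoc, ← mul_neg, ih,
      mk_one_mul_of_constantCoeff_eq_zero (by simp [dHyper_apply_zero])]
    ext n
    simp only [coeff_mk, dHyper_succ lam hr]

/-- for `r ≥ 1`, in `ℝ[[t]]`,
`-(1-t)^{-r} log_λ(1-t) = ∑_{n=1}^∞ H^{(r)}_{n,λ} t^n`
(the coefficient of `t^0` on both sides being `0`, as `H^{(r)}_{0,λ} = 0`). -/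
theorem statement_17 (lam : ℝ) (hlam : lam ≠ 0) (r : ℕ) (hr : 1 ≤ r) :
    -(((1 - PowerSeries.X : PowerSeries ℝ)⁻¹) ^ r * dlogNeg lam) =
      PowerSeries.mk fun n => dHyper lam r n :=
  statement_17_general lam r hr
end
end

section
/- Fix a nonzero real number λ and integers k ≥ 0, r ≥ 0. In ℝ[[t]]: (1/k!) · (e_λ(t) − 1)^k · e_λ(t)^r = Σ_{n=k}^{∞} {n+r brace k+r}_{r,λ} t^n / n!, i.e., for every n ≥ k, n! times the coefficient of t^n in (e_λ(t)−1)^k e_λ(t)^r / k! equals the degenerate r-Stirling number of the second kind {n+r brace k+r}_{r,λ}, and the coefficients vanish for n < k. -/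
/-!
Put `e_λ(t)^x := ∑ (x)_{n,λ} tⁿ / n!` for real `x`. The degenerate Vandermonde identity
`(x + y)_{n,λ} = ∑ C(n,i) (x)_{i,λ} (y)_{n-i,λ}` makes `x ↦ e_λ(t)^x` multiplicative, so
`(e_λ(t) - 1)^k e_λ(t)^r = ∑_j (-1)^(k-j) C(k,j) e_λ(t)^(j+r)`. Hence `n!` times its `n`-th
coefficient is the `k`-th forward difference at `0` of `x ↦ (x + r)_{n,λ} = ∑_m S n m (x)_m`,
and the `k`-th forward difference of `(x)_m` at `0` is `k!` if `m = k` and `0` otherwise.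
-/

open Finset PowerSeries

noncomputable section

/-- The degenerate exponential `e_λ(t) = ∑_{n=0}^∞ (1)_{n,λ} t^n / n!` in `ℝ[[t]]`. -/
def elam (lam : ℝ) : PowerSeries ℝ :=
  PowerSeries.mk fun n => dff lam 1 n / n.factorial

theorem dff_succ (lam x : ℝ) (n : ℕ) : dff lam x (n + 1) = dff lam x n * (x - n * lam) :=
  prod_range_succ _ _

theorem dff_add (lam x y : ℝ) (n : ℕ) :
    dff lam (x + y) n =
      ∑ ij ∈ antidiagonal n, (n.choose ij.1 : ℝ) * (dff lam x ij.1 * dff lam y ij.2) := by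
  induction n with
  | zero => simp [dff]
  | succ n ih =>
    rw [sum_antidiagonal_choose_succ_mul (fun i j => dff lam x i * dff lam y j),
      ← sum_add_distrib, dff_succ, ih, sum_mul]
    refine sum_congr rfl fun ij hij => ?_
    rw [HasAntidiagonal.mem_antidiagonal] at hij
    have hn : (n : ℝ) = ij.1 + ij.2 := by exact_mod_cast hij.symm
    rw [← Nat.choose_symm_of_eq_add hij.symm, dff_succ, dff_succ, hn]
    ring

theorem PowerSeries.mk_div_factorial_mul_mk_div_factorial {K : Type*} [Field K] [CharZero K]
    (a b : ℕ → K) :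
    mk (fun n => a n / n.factorial) * mk (fun n => b n / n.factorial) =
      mk fun n =>
        (∑ ij ∈ antidiagonal n, (n.choose ij.1 : K) * (a ij.1 * b ij.2)) / n.factorial := by
  ext n
  rw [coeff_mul, coeff_mk, sum_div]
  refine sum_congr rfl fun ⟨i, j⟩ hij => ?_
  rw [HasAntidiagonal.mem_antidiagonal] at hij
  subst hij
  have h := Nat.add_choose_mul_factorial_mul_factorial i j
  rw [← Nat.choose_symm_add] at h
  simp only [coeff_mk]
  have hc : ((i + j).choose i : K) ≠ 0 := mod_cast (Nat.choose_pos (by omega)).ne'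
  rw [← h]
  push_cast
  field_simp

theorem ff_natCast_s18 (j m : ℕ) : ff j m = m.factorial * j.choose m := by
  rw [ff, ← descPochhammer_eval_eq_prod_range, Nat.cast_choose_eq_descPochhammer_div]
  field_simp

theorem sum_alternating_choose_mul_ff (k m : ℕ) :
    ∑ j ∈ range (k + 1), (-1 : ℝ) ^ (k - j) * k.choose j * ff j m =
      if k = m then (k.factorial : ℝ) else 0 := by
  have h := congrArg (Int.cast : ℤ → ℝ) (fwdDiff_iter_choose_zero m k)
  simp only [fwdDiff_iter_eq_sum_shift, zero_add, smul_eq_mul, mul_one] at h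
  push_cast at h
  have hk : (if k = m then (k.factorial : ℝ) else 0) = m.factorial * if k = m then 1 else 0 := by
    split_ifs with hkm <;> simp [hkm]
  simp only [ff_natCast_s18, hk, ← h, mul_sum]
  exact sum_congr rfl fun j _ => by ring

theorem sum_alternating_choose_mul_sum_ff (k N : ℕ) (a : ℕ → ℝ) :
    ∑ j ∈ range (k + 1), (-1 : ℝ) ^ (k - j) * k.choose j *
        ∑ m ∈ range (N + 1), a m * ff j m =
      if k ≤ N then a k * k.factorial else 0 := by
  have h : ∀ m, ∑ j ∈ range (k + 1), (-1 : ℝ) ^ (k - j) * k.choose j * (a m * ff j m) =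
      if k = m then a m * k.factorial else 0 := fun m => by
    simp_rw [mul_left_comm _ (a m), ← mul_sum, sum_alternating_choose_mul_ff, mul_ite, mul_zero]
  simp_rw [mul_sum]
  rw [sum_comm]
  simp_rw [h, sum_ite_eq, mem_range, Nat.lt_succ_iff]

/-- `e_λ(t)^x = ∑ (x)_{n,λ} tⁿ / n!` for real `x`. -/
def degExp (lam x : ℝ) : ℝ⟦X⟧ := mk fun n => dff lam x n / n.factorial

theorem degExp_add (lam x y : ℝ) : degExp lam (x + y) = degExp lam x * degExp lam y := by
  simp only [degExp, mk_div_factorial_mul_mk_div_factorial, dff_add]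

theorem degExp_zero (lam : ℝ) : degExp lam 0 = 1 := by
  ext (_ | n)
  · simp [degExp, dff]
  · simp [degExp, dff, coeff_one, prod_range_succ']

theorem elam_pow (lam : ℝ) (m : ℕ) : elam lam ^ m = degExp lam m := by
  induction m with
  | zero => simp [degExp_zero]
  | succ m ih => rw [pow_succ, ih, Nat.cast_succ, degExp_add]; rfl

theorem elam_sub_one_pow_mul_elam_pow (lam : ℝ) (k r : ℕ) :
    (elam lam - 1) ^ k * elam lam ^ r =
      ∑ j ∈ range (k + 1), C ((-1 : ℝ) ^ (k - j) * k.choose j) * degExp lam (j + r) := by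
  rw [sub_eq_add_neg, add_pow, sum_mul]
  refine sum_congr rfl fun j _ => ?_
  rw [← Nat.cast_add, ← elam_pow, pow_add]
  simp only [map_mul, map_pow, map_neg, map_one, map_natCast]
  ring

theorem statement_18_general (lam : ℝ) (k r : ℕ)
    (S : ℕ → ℕ → ℝ)
    (hS : ∀ (n : ℕ) (x : ℝ), dff lam (x + r) n = ∑ j ∈ Finset.range (n + 1), S n j * ff x j) :
    ((k.factorial : ℝ))⁻¹ • ((elam lam - 1) ^ k * elam lam ^ r) =
      PowerSeries.mk fun n => if k ≤ n then S n k / n.factorial else 0 := by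
  ext n
  have hcoeff : coeff n ((elam lam - 1) ^ k * elam lam ^ r) =
      (∑ j ∈ range (k + 1), (-1 : ℝ) ^ (k - j) * k.choose j * dff lam (j + r) n) /
        n.factorial := by
    simp only [elam_sub_one_pow_mul_elam_pow, map_sum, coeff_C_mul, degExp, coeff_mk, sum_div,
      mul_div_assoc]
  rw [coeff_smul, smul_eq_mul, hcoeff, coeff_mk]
  simp only [hS, sum_alternating_choose_mul_sum_ff]
  split_ifs
  · field_simp
  · simp

/-- in `ℝ[[t]]`,
`(1/k!) (e_λ(t) - 1)^k e_λ(t)^r = ∑_{n=k}^∞ {n+r brace k+r}_{r,λ} t^n / n!`,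
where `S n k` denotes the degenerate `r`-Stirling number of the second kind
`{n+r brace k+r}_{r,λ}`, characterized by `(x+r)_{n,λ} = ∑_{k=0}^n S n k (x)_k`;
the coefficients of `t^n` for `n < k` vanish. -/
theorem statement_18 (lam : ℝ) (hlam : lam ≠ 0) (k r : ℕ)
    (S : ℕ → ℕ → ℝ)
    (hS : ∀ (n : ℕ) (x : ℝ), dff lam (x + r) n = ∑ j ∈ Finset.range (n + 1), S n j * ff x j) :
    ((k.factorial : ℝ))⁻¹ • ((elam lam - 1) ^ k * elam lam ^ r) =
      PowerSeries.mk fun n => if k ≤ n then S n k / n.factorial else 0 :=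
  statement_18_general lam k r S hS
end
end

section
/- Fix a nonzero real number λ and integers k ≥ 0, r ≥ 0. In ℝ[[t]]: (1/k!) · (−log_λ(1−t))^k · (1−t)^{−r} = Σ_{n=k}^{∞} [n+r brack k+r]_{r,λ} t^n / n!, i.e., for every n ≥ k, n! times the coefficient of t^n in (−log_λ(1−t))^k (1−t)^{−r} / k! equals the degenerate unsigned r-Stirling number of the first kind [n+r brack k+r]_{r,λ}, and the coefficients vanish for n < k. -/
open Finset PowerSeries

noncomputable section

/-- The rising factorial `⟨x⟩_n = x(x+1)⋯(x+n-1)`. -/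
def rise (x : ℝ) (n : ℕ) : ℝ := ∏ i ∈ Finset.range n, (x + i)

/-- The degenerate rising factorial `⟨x⟩_{n,λ} = x(x+λ)⋯(x+(n-1)λ)`. -/
def drise (lam x : ℝ) (n : ℕ) : ℝ := ∏ i ∈ Finset.range n, (x + i * lam)

/-!
With `F = -log_λ(1-t) = (1 - (1-t)^λ)/λ` and `S = (1-t)⁻¹` one has `(1-t) F' = 1 - λF` and
`(1-t) S' = S`, so `G_k = F^k S^r` satisfies
`(1-t) G_{k+1}' = (k+1) G_k + (r - λ(k+1)) G_{k+1}`.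
Comparing coefficients of `tⁿ`, the numbers `n! [tⁿ] G_k / k!` obey the recurrence that
matches `⟨x+r⟩_{n+1} = ⟨x+r⟩_n (x+r+n)` with `⟨x⟩_{k+1,λ} = ⟨x⟩_{k,λ} (x+kλ)`, hence satisfy
the defining expansion of `[n+r brack k+r]_{r,λ}`. The degenerate rising factorials are
polynomials of every degree, hence linearly independent, so these expansion coefficients are
unique.
-/

open scoped Nat

theorem Polynomial.Sequence.eq_of_sum_mul_eval_eq {R : Type*} [CommRing R] [IsDomain R]
    [Infinite R] (S : Polynomial.Sequence R) {m : ℕ} {c d : ℕ → R}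
    (h : ∀ x, ∑ j ∈ range m, c j * (S j).eval x = ∑ j ∈ range m, d j * (S j).eval x) :
    ∀ j < m, c j = d j := by
  have hpoly : ∑ j ∈ range m, (c j - d j) • S j = 0 := by
    refine Polynomial.funext fun x => ?_
    simp [Polynomial.eval_finsetSum, sub_mul, sum_sub_distrib, h x]
  intro j hj
  exact sub_eq_zero.mp <|
    linearIndependent_iff'.mp S.linearIndependent _ _ hpoly j (mem_range.mpr hj)

def drisePoly (lam : ℝ) (n : ℕ) : Polynomial ℝ :=
  ∏ i ∈ range n, (Polynomial.X + Polynomial.C ((i : ℝ) * lam))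

theorem eval_drisePoly (lam x : ℝ) (n : ℕ) : (drisePoly lam n).eval x = drise lam x n := by
  simp [drisePoly, drise, Polynomial.eval_prod]

theorem degree_drisePoly (lam : ℝ) (n : ℕ) : (drisePoly lam n).degree = n := by
  rw [drisePoly, Polynomial.degree_prod]
  simp_rw [Polynomial.degree_X_add_C]
  simp

def driseSeq (lam : ℝ) : Polynomial.Sequence ℝ := ⟨drisePoly lam, degree_drisePoly lam⟩

theorem eq_of_sum_mul_drise_eq {lam : ℝ} {m : ℕ} {c d : ℕ → ℝ}
    (h : ∀ x, ∑ j ∈ range m, c j * drise lam x j = ∑ j ∈ range m, d j * drise lam x j) :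
    ∀ j < m, c j = d j :=
  (driseSeq lam).eq_of_sum_mul_eval_eq <| by simpa [driseSeq, eval_drisePoly] using h

theorem rise_succ (x : ℝ) (n : ℕ) : rise x (n + 1) = rise x n * (x + n) :=
  prod_range_succ _ _

theorem drise_succ (lam x : ℝ) (n : ℕ) : drise lam x (n + 1) = drise lam x n * (x + n * lam) :=
  prod_range_succ _ _

section OneSubXDerivative

variable {R : Type*} [CommRing R]

theorem PowerSeries.coeff_one_sub_X_mul_derivative (f : R⟦X⟧) (n : ℕ) :
    coeff n ((1 - X) * d⁄dX R f) = (n + 1) * coeff (n + 1) f - n * coeff n f := by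
  rw [sub_mul, one_mul, map_sub, coeff_derivative]
  cases n with
  | zero => simp
  | succ n =>
    rw [coeff_succ_X_mul, coeff_derivative]
    push_cast
    ring

theorem PowerSeries.one_sub_X_mul_derivative_pow {S : R⟦X⟧}
    (hS : (1 - X) * d⁄dX R S = S) (r : ℕ) :
    (1 - X) * d⁄dX R (S ^ r) = (r : R) • S ^ r := by
  induction r with
  | zero => simp
  | succ r ih =>
    rw [pow_succ, Derivation.leibniz, smul_eq_mul, smul_eq_mul, mul_add, mul_left_comm,
      hS, mul_left_comm, ih, smul_eq_C_mul, smul_eq_C_mul]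
    simp only [Nat.cast_succ, map_add, map_natCast, map_one]
    ring

theorem PowerSeries.one_sub_X_mul_derivative_pow_succ_mul_pow {F S : R⟦X⟧} {c : R}
    (hF : (1 - X) * d⁄dX R F = 1 - C c * F) (hS : (1 - X) * d⁄dX R S = S) (k r : ℕ) :
    (1 - X) * d⁄dX R (F ^ (k + 1) * S ^ r) =
      ((k : R) + 1) • (F ^ k * S ^ r) + (r - c * (k + 1)) • (F ^ (k + 1) * S ^ r) := by
  have hFk : d⁄dX R (F ^ (k + 1)) = ((k : R⟦X⟧) + 1) * F ^ k * d⁄dX R F := by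
    rw [Derivation.leibniz_pow, Nat.add_sub_cancel, nsmul_eq_mul, smul_eq_mul]
    push_cast
    ring
  have hSr := one_sub_X_mul_derivative_pow hS r
  rw [smul_eq_C_mul, map_natCast] at hSr
  rw [Derivation.leibniz, smul_eq_mul, smul_eq_mul, hFk, smul_eq_C_mul, smul_eq_C_mul]
  simp only [map_sub, map_mul, map_add, map_one, map_natCast]
  linear_combination F ^ (k + 1) * hSr +
    ((k : R⟦X⟧) + 1) * F ^ k * S ^ r * hF

end OneSubXDerivative

theorem PowerSeries.one_sub_X_mul_derivative_inv_one_sub_X {K : Type*} [Field K] :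
    (1 - X : K⟦X⟧) * d⁄dX K (1 - X)⁻¹ = (1 - X)⁻¹ := by
  have h : (1 - X : K⟦X⟧) * (1 - X)⁻¹ = 1 := PowerSeries.mul_inv_cancel _ (by simp)
  rw [PowerSeries.derivative_inv', map_sub, Derivation.map_one_eq_zero, derivative_X]
  linear_combination (1 - X : K⟦X⟧)⁻¹ * h

theorem gbinom_succ_mul (x : ℝ) (n : ℕ) :
    gbinom x (n + 1) * (n + 1) = gbinom x n * (x - n) := by
  rw [gbinom, gbinom, prod_range_succ, Nat.factorial_succ]
  push_cast
  field_simp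

theorem one_sub_X_mul_derivative_neg_dlogNeg {lam : ℝ} (hlam : lam ≠ 0) :
    (1 - X) * d⁄dX ℝ (-dlogNeg lam) = 1 - C lam * (-dlogNeg lam) := by
  ext n
  rw [coeff_one_sub_X_mul_derivative, map_sub, coeff_C_mul, coeff_one]
  simp only [map_neg, dlogNeg, coeff_mk, Nat.add_one_ne_zero, if_false]
  rcases n with _ | n
  · simp [gbinom, hlam]
  · simp only [Nat.add_one_ne_zero, if_false]
    have h := gbinom_succ_mul lam (n + 1)
    rw [eq_div_of_mul_eq (by positivity) h]
    push_cast
    field_simp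
    ring

def stirlingSeries (lam : ℝ) (r k : ℕ) : ℝ⟦X⟧ := (-dlogNeg lam) ^ k * ((1 - X)⁻¹) ^ r

def rStirling (lam : ℝ) (r n k : ℕ) : ℝ := n ! / k ! * coeff n (stirlingSeries lam r k)

section rStirling

variable {lam : ℝ} {r : ℕ}

theorem coeff_stirlingSeries_of_lt {n k : ℕ} (h : n < k) :
    coeff n (stirlingSeries lam r k) = 0 := by
  have hX : X ∣ -dlogNeg lam := X_dvd_iff.mpr <| by simp [dlogNeg]
  exact X_pow_dvd_iff.mp ((pow_dvd_pow_of_dvd hX k).mul_right _) n h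

theorem rStirling_of_lt {n k : ℕ} (h : n < k) : rStirling lam r n k = 0 := by
  rw [rStirling, coeff_stirlingSeries_of_lt h, mul_zero]

theorem rStirling_zero_zero : rStirling lam r 0 0 = 1 := by
  simp [rStirling, stirlingSeries]

theorem rStirling_succ_zero (n : ℕ) :
    rStirling lam r (n + 1) 0 = (n + r) * rStirling lam r n 0 := by
  have h := congrArg (coeff n) <| one_sub_X_mul_derivative_pow
    (one_sub_X_mul_derivative_inv_one_sub_X (K := ℝ)) r
  rw [coeff_one_sub_X_mul_derivative, coeff_smul, smul_eq_mul] at h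
  simp only [rStirling, stirlingSeries, pow_zero, one_mul, Nat.factorial_succ]
  push_cast
  linear_combination (n ! : ℝ) * h

theorem rStirling_succ_succ (hlam : lam ≠ 0) (n k : ℕ) :
    rStirling lam r (n + 1) (k + 1) =
      rStirling lam r n k + (n + r - lam * (k + 1)) * rStirling lam r n (k + 1) := by
  have h := congrArg (coeff n) <| one_sub_X_mul_derivative_pow_succ_mul_pow
    (one_sub_X_mul_derivative_neg_dlogNeg hlam) one_sub_X_mul_derivative_inv_one_sub_X k r
  rw [coeff_one_sub_X_mul_derivative, map_add, coeff_smul, coeff_smul, smul_eq_mul,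
    smul_eq_mul] at h
  simp only [rStirling, stirlingSeries, Nat.factorial_succ]
  push_cast
  field_simp
  linear_combination h

end rStirling

theorem rise_add_eq_sum_rStirling_mul_drise {lam : ℝ} (hlam : lam ≠ 0) (r n : ℕ) (x : ℝ) :
    rise (x + r) n = ∑ j ∈ range (n + 1), rStirling lam r n j * drise lam x j := by
  induction n with
  | zero => simp [rise, drise, rStirling_zero_zero]
  | succ n ih =>
    set a := rStirling lam r
    have hshift :
        ∑ j ∈ range (n + 1), (n + r - lam * (j + 1)) * a n (j + 1) * drise lam x (j + 1)
          + (n + r) * a n 0 * drise lam x 0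
        = ∑ j ∈ range (n + 1), (n + r - lam * j) * a n j * drise lam x j := by
      have h := sum_range_succ' (fun j => (n + r - lam * j) * a n j * drise lam x j) (n + 1)
      rw [sum_range_succ, show a n (n + 1) = 0 from rStirling_of_lt n.lt_succ_self] at h
      push_cast at h
      linear_combination -h
    calc rise (x + r) (n + 1)
        = ∑ j ∈ range (n + 1), a n j * drise lam x j * (x + r + n) := by
          rw [rise_succ, ih, sum_mul]
      _ = ∑ j ∈ range (n + 1), a n j * drise lam x (j + 1)
          + ∑ j ∈ range (n + 1), (n + r - lam * j) * a n j * drise lam x j := by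
          rw [← sum_add_distrib]
          refine sum_congr rfl fun j _ => ?_
          rw [drise_succ]
          ring
      _ = ∑ j ∈ range (n + 1 + 1), a (n + 1) j * drise lam x j := by
          rw [← hshift, sum_range_succ' _ (n + 1)]
          simp only [a, rStirling_succ_zero, rStirling_succ_succ hlam, add_mul, sum_add_distrib]
          ring

/-- in `ℝ[[t]]`,
`(1/k!) (-log_λ(1-t))^k (1-t)^{-r} = ∑_{n=k}^∞ [n+r brack k+r]_{r,λ} t^n / n!`,
where `B n k` denotes the degenerate unsigned `r`-Stirling number of the first kind
`[n+r brack k+r]_{r,λ}`, characterized by `⟨x+r⟩_n = ∑_{k=0}^n B n k ⟨x⟩_{k,λ}`;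
the coefficients of `t^n` for `n < k` vanish. -/
theorem statement_19 (lam : ℝ) (hlam : lam ≠ 0) (k r : ℕ)
    (B : ℕ → ℕ → ℝ)
    (hB : ∀ (n : ℕ) (x : ℝ),
      rise (x + r) n = ∑ j ∈ Finset.range (n + 1), B n j * drise lam x j) :
    ((k.factorial : ℝ))⁻¹ •
        ((-dlogNeg lam) ^ k * ((1 - PowerSeries.X : PowerSeries ℝ)⁻¹) ^ r) =
      PowerSeries.mk fun n => if k ≤ n then B n k / n.factorial else 0 := by
  have hB_eq (n : ℕ) (hkn : k ≤ n) : B n k = rStirling lam r n k :=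
    eq_of_sum_mul_drise_eq
      (fun x => (hB n x).symm.trans (rise_add_eq_sum_rStirling_mul_drise hlam r n x))
      k (Nat.lt_succ_of_le hkn)
  ext n
  rw [coeff_smul, coeff_mk, smul_eq_mul, ← stirlingSeries]
  split_ifs with hkn
  · rw [hB_eq n hkn, rStirling]
    field_simp
  · rw [coeff_stirlingSeries_of_lt (not_le.mp hkn), mul_zero]
end
end
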